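/- For any prior μ and feasible set F, a set O ⊆ Δ(Ω) is implementable if and only if, for the utility function v_O defined by v_O(p) = 1 for p ∈ O and v_O(p) = 0 for p ∈ Δ(Ω) ∖ O, the corresponding value function satisfies v_∞(μ) = 1. -/
import Mathlib


open Filter Topology
open scoped Classical

noncomputable section

/-- Δ(Ω): beliefs, i.e. probability distributions on the finite state space Ω,
as a subspace of Ω → ℝ (its topology agrees with the total-variation one). -/
abbrev Belief (Ω : Type*) [Fintype Ω] :=
  {p : Ω → ℝ // (∀ ω, 0 ≤ p ω) ∧ ∑ ω, p ω = 1}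

variable {Ω : Type*} [Fintype Ω]

/-- An element of F₀: a finite-support experiment, i.e. a finitely supported probability
distribution over beliefs (keys are the distinct posteriors p_j, values the positive
weights λ_j). -/
structure SPExp (Ω : Type*) [Fintype Ω] where
  w : Belief Ω →₀ ℝ
  nonneg : ∀ p, 0 ≤ w p
  sum_one : ∑ p ∈ w.support, w p = 1

namespace SPExp

/-- τ(e): the support of an experiment. -/
def tau (e : SPExp Ω) : Finset (Belief Ω) := e.w.support

/-- Expectation of a real-valued function under an experiment. -/
def expect (e : SPExp Ω) (f : Belief Ω → ℝ) : ℝ := ∑ p ∈ e.w.support, e.w p * f p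

/-- σ(e): the barycenter (expectation) of an experiment. -/
def sigma (e : SPExp Ω) : Belief Ω :=
  ⟨fun ω => ∑ p ∈ e.w.support, e.w p * p.val ω,
   fun ω => Finset.sum_nonneg fun p _ => mul_nonneg (e.nonneg p) (p.2.1 ω),
   by
     calc ∑ ω, ∑ p ∈ e.w.support, e.w p * p.val ω
         = ∑ p ∈ e.w.support, ∑ ω, e.w p * p.val ω := Finset.sum_comm
       _ = ∑ p ∈ e.w.support, e.w p * ∑ ω, p.val ω := by
           refine Finset.sum_congr rfl fun p _ => ?_
           rw [Finset.mul_sum]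
       _ = ∑ p ∈ e.w.support, e.w p := by
           refine Finset.sum_congr rfl fun p _ => ?_
           rw [p.2.2, mul_one]
       _ = 1 := e.sum_one⟩

/-- The trivial experiment (1, p). -/
def triv (p : Belief Ω) : SPExp Ω where
  w := Finsupp.single p 1
  nonneg := fun q => by
    rw [Finsupp.single_apply]
    split <;> norm_num
  sum_one := by
    rw [Finsupp.support_single_ne_zero _ one_ne_zero]
    simp

end SPExp

/-- T: the set of trivial experiments. -/
def Trivials (Ω : Type*) [Fintype Ω] : Set (SPExp Ω) := Set.range SPExp.triv

/-- Weak convergence of experiments, viewed as Borel probability measures on Δ(Ω). -/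
def WeakTendsto (es : ℕ → SPExp Ω) (e : SPExp Ω) : Prop :=
  ∀ f : Belief Ω → ℝ, Continuous f →
    Tendsto (fun i => (es i).expect f) atTop (𝓝 (e.expect f))

/-- Convergence of beliefs in total variation. -/
def TVTendsto (ps : ℕ → Belief Ω) (p : Belief Ω) : Prop :=
  Tendsto (fun i => ∑ ω, |(ps i).val ω - p.val ω|) atTop (𝓝 0)

/-- Histories, most recent step first: entries are (experiment taken, realized posterior);
the starting belief is kept separately. -/
abbrev Hist (Ω : Type*) [Fintype Ω] := List (SPExp Ω × Belief Ω)

/-- last(ξ): the current belief after history ξ started at μ. -/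
def lastBelief (μ : Belief Ω) : Hist Ω → Belief Ω
  | [] => μ
  | (_, p) :: _ => p

/-- Pr[ξ]: the probability of a history. -/
def histProb : Hist Ω → ℝ
  | [] => 1
  | (e, p) :: ξ => e.w p * histProb ξ

/-- A sequential persuasion starting from μ with feasible experiments F, given by its
history-dependent choice of the next (feasible, Bayes-plausible) experiment.  An n-step
sequential persuasion is such a strategy used for n steps; an infinite sequential
persuasion is the strategy itself. -/
structure SeqP {Ω : Type*} [Fintype Ω] (F : Set (SPExp Ω)) (μ : Belief Ω) where
  next : Hist Ω → SPExp Ω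
  feasible : ∀ ξ, next ξ ∈ F
  bayes : ∀ ξ, (next ξ).sigma = lastBelief μ ξ

variable {F : Set (SPExp Ω)} {μ : Belief Ω}

/-- Expectation of g over the n-step histories of S extending ξ. -/
def histExp (S : SeqP F μ) (g : Hist Ω → ℝ) : ℕ → Hist Ω → ℝ
  | 0, ξ => g ξ
  | n + 1, ξ => (S.next ξ).expect fun p => histExp S g n ((S.next ξ, p) :: ξ)

/-- Ξ_n: the set of n-step histories of S. -/
def Hists (S : SeqP F μ) : ℕ → Set (Hist Ω)
  | 0 => {[]}
  | n + 1 => {ξ' | ∃ ξ ∈ Hists S n, ∃ p ∈ (S.next ξ).tau, ξ' = (S.next ξ, p) :: ξ}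

/-- ξ padded by l trivial steps. -/
def padHist (μ : Belief Ω) (ξ : Hist Ω) (l : ℕ) : Hist Ω :=
  List.replicate l (SPExp.triv (lastBelief μ ξ), lastBelief μ ξ) ++ ξ

/-- S terminates after ξ: all subsequent choices (along trivial continuations of ξ)
are the trivial experiment. -/
def TerminatesAfter (S : SeqP F μ) (ξ : Hist Ω) : Prop :=
  ∀ l : ℕ, S.next (padHist μ ξ l) = SPExp.triv (lastBelief μ ξ)

/-- 𝒱(S⁽ⁿ⁾) = E[v(b_n)], the expected utility of the n-step persuasion given by the
first n steps of S. -/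
def stepUtility (v : Belief Ω → ℝ) (S : SeqP F μ) (n : ℕ) : ℝ :=
  histExp S (fun ξ => v (lastBelief μ ξ)) n []

/-- Pr[S terminates after n steps]. -/
def termProb (S : SeqP F μ) (n : ℕ) : ℝ :=
  histExp S (fun ξ => if TerminatesAfter S ξ then 1 else 0) n []

/-- 𝒱(S) for an infinite sequential persuasion S. -/
def infUtility (v : Belief Ω → ℝ) (S : SeqP F μ) : ℝ :=
  ⨆ n : ℕ, histExp S (fun ξ => if TerminatesAfter S ξ then v (lastBelief μ ξ) else 0) n []

/-- Pr[b_n ∈ O] for the belief b_n induced by S after n steps. -/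
def massIn (S : SeqP F μ) (O : Set (Belief Ω)) (n : ℕ) : ℝ :=
  histExp S (fun ξ => if lastBelief μ ξ ∈ O then 1 else 0) n []

/-- v_n(p): the optimal value over n-step sequential persuasions starting from p. -/
def vN (F : Set (SPExp Ω)) (v : Belief Ω → ℝ) (n : ℕ) (p : Belief Ω) : ℝ :=
  ⨆ S : SeqP F p, stepUtility v S n

/-- v_∞(p): the optimal value over infinite sequential persuasions starting from p. -/
def vInf (F : Set (SPExp Ω)) (v : Belief Ω → ℝ) (p : Belief Ω) : ℝ :=
  ⨆ S : SeqP F p, infUtility v S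

/-- Assumption 1: a uniform support bound h, and weak closedness of F. -/
def Assumption1 (F : Set (SPExp Ω)) (h : ℕ) : Prop :=
  (∀ e ∈ F, e.tau.card ≤ h) ∧
  ∀ es : ℕ → SPExp Ω, (∀ i, es i ∈ F) → ∀ e : SPExp Ω, WeakTendsto es e → e ∈ F

/-- Shannon entropy of a belief. -/
def entropy (p : Belief Ω) : ℝ := -∑ ω, p.val ω * Real.log (p.val ω)

/-- Assumption 2: every nontrivial feasible experiment lowers expected entropy by δ. -/
def Assumption2 (F : Set (SPExp Ω)) (δ : ℝ) : Prop :=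
  ∀ e ∈ F \ Trivials Ω, e.expect entropy ≤ entropy e.sigma - δ

/-- S is (effectively) an n-step sequential persuasion: after n steps it only takes
trivial experiments. -/
def IsNStep (S : SeqP F μ) (n : ℕ) : Prop :=
  ∀ ξ : Hist Ω, n ≤ ξ.length → S.next ξ = SPExp.triv (lastBelief μ ξ)

/-- Assumption 3 at prior μ: a sequence of finite-step sequential persuasions whose
values tend to v_∞(μ) and which terminate at a uniform rate. -/
def Assumption3 (F : Set (SPExp Ω)) (v : Belief Ω → ℝ) (μ : Belief Ω) : Prop :=
  ∃ (nk : ℕ → ℕ) (Sk : ℕ → SeqP F μ),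
    (∀ k, IsNStep (Sk k) (nk k)) ∧
    Tendsto (fun k => stepUtility v (Sk k) (nk k)) atTop (𝓝 (vInf F v μ)) ∧
    ∀ ε : ℝ, 0 < ε → ∃ N : ℕ, ∀ k, N ≤ nk k → 1 - ε ≤ termProb (Sk k) N

/-- v̂: the concave closure of v (the value of unconstrained Bayesian persuasion). -/
def concaveClosure (v : Belief Ω → ℝ) (p : Belief Ω) : ℝ :=
  sSup {x : ℝ | ∃ e : SPExp Ω, e.sigma = p ∧ x = e.expect v}

/-- O is implementable for (μ, F). -/
def Implementable (F : Set (SPExp Ω)) (μ : Belief Ω) (O : Set (Belief Ω)) : Prop :=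
  ∀ ε : ℝ, 0 < ε → ∃ (n : ℕ) (S : SeqP F μ), 1 - ε < massIn S O n

/-- S is a Markov sequential persuasion compatible with (μ, D, Z, ρ). -/
def MarkovCompatible (S : SeqP F μ) (D Z : Set (Belief Ω)) (ρ : Belief Ω → SPExp Ω) : Prop :=
  ∀ ξ : Hist Ω,
    (lastBelief μ ξ ∈ D → S.next ξ = ρ (lastBelief μ ξ)) ∧
    (lastBelief μ ξ ∈ Z → S.next ξ = SPExp.triv (lastBelief μ ξ))

/-- The j-th child of vertex m at depth n of the infinite h-ary tree. -/
def treeChild {h n : ℕ} (m : Fin (h ^ n)) (j : Fin h) : Fin (h ^ (n + 1)) :=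
  ⟨m.val * h + j.val, by
    have h1 : m.val + 1 ≤ h ^ n := m.isLt
    have h2 : j.val < h := j.isLt
    calc m.val * h + j.val < m.val * h + h := by omega
      _ = (m.val + 1) * h := by ring
      _ ≤ h ^ n * h := Nat.mul_le_mul h1 le_rfl
      _ = h ^ (n + 1) := (pow_succ h n).symm⟩

/-- An h-branching sequential persuasion starting from μ. -/
structure HBranch (Ω : Type*) [Fintype Ω] (F : Set (SPExp Ω)) (h : ℕ) (μ : Belief Ω) where
  π : ∀ n : ℕ, Fin (h ^ n) → ℝ
  β : ∀ n : ℕ, Fin (h ^ n) → Belief Ω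
  η : ∀ n : ℕ, Fin (h ^ n) → SPExp Ω
  π_nonneg : ∀ n m, 0 ≤ π n m
  π_sum : ∀ n : ℕ, ∑ m, π n m = 1
  η_mem : ∀ n m, η n m ∈ F
  β_root : ∀ m, β 0 m = μ
  compat_sigma : ∀ n m, (η n m).sigma = β n m
  compat_tau : ∀ (n : ℕ) (m : Fin (h ^ n)), ∀ p ∈ (η n m).tau,
    ∃ j : Fin h, β (n + 1) (treeChild m j) = p
  consistent : ∀ (n : ℕ) (m : Fin (h ^ n)) (p : Belief Ω),
    (∑ j : Fin h, if β (n + 1) (treeChild m j) = p then π (n + 1) (treeChild m j) else 0)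
      = π n m * (η n m).w p

/-- c' (at depth n + l) is a descendant of c (at depth n) in the h-ary tree. -/
def Descendant {h : ℕ} : {n : ℕ} → (l : ℕ) → Fin (h ^ n) → Fin (h ^ (n + l)) → Prop
  | _, 0, c, c' => c = c'
  | _, l + 1, c, c' => ∃ c'' j, Descendant l c c'' ∧ c' = treeChild c'' j

namespace HBranch

variable {h : ℕ}

/-- B terminates after vertex m at depth n. -/
def TermAfter (B : HBranch Ω F h μ) (n : ℕ) (m : Fin (h ^ n)) : Prop :=
  B.η n m ∈ Trivials Ω ∧
  ∀ (l : ℕ) (c' : Fin (h ^ (n + l))), Descendant l m c' → 0 < B.π (n + l) c' →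
    B.η (n + l) c' ∈ Trivials Ω

/-- Pr[B terminates after n steps]. -/
def termProb (B : HBranch Ω F h μ) (n : ℕ) : ℝ :=
  ∑ m : Fin (h ^ n), if B.TermAfter n m then B.π n m else 0

end HBranch

/-- B represents the infinite sequential persuasion S (via maps r_n : C_n → Ξ_n). -/
def Represents (S : SeqP F μ) {h : ℕ} (B : HBranch Ω F h μ) : Prop :=
  ∃ r : ∀ n : ℕ, Fin (h ^ n) → Hist Ω,
    ∀ n : ℕ,
      (∀ c, r n c ∈ Hists S n) ∧
      (∀ ξ ∈ Hists S n, histProb ξ = ∑ c, if r n c = ξ then B.π n c else 0) ∧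
      (∀ c, lastBelief μ (r n c) = B.β n c ∧ S.next (r n c) = B.η n c) ∧
      (∀ l : ℕ, ∀ ξ ∈ Hists S n, ∀ ξ' ∈ Hists S (n + l),
        (ξ <:+ ξ' ↔
          ∀ c' : Fin (h ^ (n + l)), r (n + l) c' = ξ' →
            ∃ c : Fin (h ^ n), r n c = ξ ∧ Descendant l c c'))

/-- The number of nontrivial experiments taken along a history. -/
def nontrivCount (ξ : Hist Ω) : ℕ :=
  ξ.countP fun s => decide (s.1 ∉ Trivials Ω)

end

noncomputable section AuxLem
variable {Ω : Type*} [Fintype Ω] {F : Set (SPExp Ω)} {μ : Belief Ω}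

lemma SPExp.expect_mono (e : SPExp Ω) {f g : Belief Ω → ℝ} (h : ∀ p, f p ≤ g p) :
    e.expect f ≤ e.expect g :=
  Finset.sum_le_sum fun p _ => mul_le_mul_of_nonneg_left (h p) (e.nonneg p)

lemma SPExp.expect_const (e : SPExp Ω) (c : ℝ) : e.expect (fun _ => c) = c := by
  simp [SPExp.expect, ← Finset.sum_mul, e.sum_one]

lemma triv_sigma (p : Belief Ω) : (SPExp.triv p).sigma = p := by
  apply Subtype.ext
  funext ω
  show ∑ q ∈ (Finsupp.single p (1:ℝ)).support, (Finsupp.single p (1:ℝ)) q * q.val ω = p.val ω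
  rw [Finsupp.support_single_ne_zero _ one_ne_zero]
  simp

lemma histExp_mono (S : SeqP F μ) {g g' : Hist Ω → ℝ} (h : ∀ ξ, g ξ ≤ g' ξ) :
    ∀ (n : ℕ) (ξ : Hist Ω), histExp S g n ξ ≤ histExp S g' n ξ
  | 0, ξ => h ξ
  | n+1, ξ => SPExp.expect_mono _ fun p => histExp_mono S h n _

lemma histExp_const (S : SeqP F μ) (c : ℝ) :
    ∀ (n : ℕ) (ξ : Hist Ω), histExp S (fun _ => c) n ξ = c
  | 0, _ => rfl
  | n+1, ξ => by
    show (S.next ξ).expect (fun p => histExp S (fun _ => c) n ((S.next ξ, p) :: ξ)) = c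
    have h : ∀ p : Belief Ω, histExp S (fun _ => c) n ((S.next ξ, p) :: ξ) = c :=
      fun p => histExp_const S c n _
    simp only [h]
    exact (S.next ξ).expect_const c

lemma histExp_congr_g (S : SeqP F μ) {g g' : Hist Ω → ℝ} :
    ∀ (n : ℕ) (ξ : Hist Ω), (∀ ξ' : Hist Ω, ξ'.length = ξ.length + n → g ξ' = g' ξ') →
      histExp S g n ξ = histExp S g' n ξ
  | 0, ξ, h => h ξ (by simp)
  | n+1, ξ, h => by
    show (S.next ξ).expect _ = (S.next ξ).expect _
    unfold SPExp.expect
    refine Finset.sum_congr rfl fun p _ => ?_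
    dsimp only
    rw [histExp_congr_g S n ((S.next ξ, p) :: ξ)
      (fun ξ' hl => h ξ' (by simp only [List.length_cons] at hl ⊢; omega))]

lemma histExp_congr_S (S S' : SeqP F μ) (g : Hist Ω → ℝ) :
    ∀ (n : ℕ) (ξ : Hist Ω), (∀ ξ' : Hist Ω, ξ'.length < ξ.length + n → S.next ξ' = S'.next ξ') →
      histExp S g n ξ = histExp S' g n ξ
  | 0, _, _ => rfl
  | n+1, ξ, h => by
    have he : S.next ξ = S'.next ξ := h ξ (by omega)
    show (S.next ξ).expect (fun p => histExp S g n ((S.next ξ, p) :: ξ)) = _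
    rw [he]
    show SPExp.expect _ _ = SPExp.expect _ _
    unfold SPExp.expect
    refine Finset.sum_congr rfl fun p _ => ?_
    dsimp only
    rw [histExp_congr_S S S' g n ((S'.next ξ, p) :: ξ)
      (fun ξ' hl => h ξ' (by simp only [List.length_cons] at hl ⊢; omega))]

/-- The all-trivial sequential persuasion. -/
def trivSeqP (hTF : Trivials Ω ⊆ F) (μ : Belief Ω) : SeqP F μ where
  next ξ := SPExp.triv (lastBelief μ ξ)
  feasible ξ := hTF ⟨_, rfl⟩
  bayes ξ := triv_sigma _

lemma lastBelief_padHist (μ : Belief Ω) (ξ : Hist Ω) (l : ℕ) :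
    lastBelief μ (padHist μ ξ l) = lastBelief μ ξ := by
  cases l with
  | zero => simp [padHist]
  | succ l => simp [padHist, List.replicate_succ, lastBelief]

/-- S truncated at step n: follow S for histories shorter than n, then stop. -/
def truncSeqP (hTF : Trivials Ω ⊆ F) (S : SeqP F μ) (n : ℕ) : SeqP F μ where
  next ξ := if ξ.length < n then S.next ξ else SPExp.triv (lastBelief μ ξ)
  feasible ξ := by
    split
    · exact S.feasible ξ
    · exact hTF ⟨_, rfl⟩
  bayes ξ := by
    split
    · exact S.bayes ξ
    · exact triv_sigma _

lemma trunc_term (hTF : Trivials Ω ⊆ F) (S : SeqP F μ) (n : ℕ) (ξ : Hist Ω)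
    (h : n ≤ ξ.length) : TerminatesAfter (truncSeqP hTF S n) ξ := by
  intro l
  have hlen : ¬ (padHist μ ξ l).length < n := by
    simp only [padHist, List.length_append, List.length_replicate]
    omega
  show (if (padHist μ ξ l).length < n then S.next (padHist μ ξ l)
      else SPExp.triv (lastBelief μ (padHist μ ξ l))) = _
  rw [if_neg hlen, lastBelief_padHist]

end AuxLem

/-- Lemma 5 (lem-implement): O is implementable iff v_∞(μ) = 1 for the indicator
utility of O. -/
theorem lem_implement {Ω : Type*} [Fintype Ω] [Nonempty Ω]
    (F : Set (SPExp Ω)) (hTF : Trivials Ω ⊆ F)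
    (μ : Belief Ω) (O : Set (Belief Ω)) :
    Implementable F μ O ↔
      vInf F (fun p => if p ∈ O then (1 : ℝ) else 0) μ = 1 := by
  set v : Belief Ω → ℝ := fun p => if p ∈ O then (1 : ℝ) else 0 with hv
  haveI : Nonempty (SeqP F μ) := ⟨trivSeqP hTF μ⟩
  -- the integrand of infUtility, for a given strategy
  set G : SeqP F μ → Hist Ω → ℝ :=
    fun S ξ => if TerminatesAfter S ξ then v (lastBelief μ ξ) else 0 with hG
  have hv01 : ∀ p, (0:ℝ) ≤ v p ∧ v p ≤ 1 := by
    intro p; constructor <;> · simp only [hv]; split <;> norm_num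
  have hG1 : ∀ (S : SeqP F μ) (ξ : Hist Ω), G S ξ ≤ 1 := by
    intro S ξ; simp only [hG]; split
    · exact (hv01 _).2
    · norm_num
  have hstep_le_one : ∀ (S : SeqP F μ) (n : ℕ), histExp S (G S) n [] ≤ 1 := by
    intro S n
    calc histExp S (G S) n [] ≤ histExp S (fun _ => 1) n [] :=
          histExp_mono S (fun ξ => hG1 S ξ) n []
      _ = 1 := histExp_const S 1 n []
  have hinf_le_one : ∀ S : SeqP F μ, infUtility v S ≤ 1 := by
    intro S
    exact ciSup_le fun n => hstep_le_one S n
  have hbddS : BddAbove (Set.range fun S : SeqP F μ => infUtility v S) :=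
    ⟨1, by rintro x ⟨S, rfl⟩; exact hinf_le_one S⟩
  constructor
  · intro hImp
    have hvle : vInf F v μ ≤ 1 := ciSup_le hinf_le_one
    have hkey : ∀ ε : ℝ, 0 < ε → 1 - ε < vInf F v μ := by
      intro ε hε
      obtain ⟨n, S, hS⟩ := hImp ε hε
      set S' : SeqP F μ := truncSeqP hTF S n with hS'
      -- step 1: the terminating value of S' at depth n equals the plain value
      have e1 : histExp S' (G S') n [] = histExp S' (fun ξ => v (lastBelief μ ξ)) n [] := by
        refine histExp_congr_g S' n [] ?_
        intro ξ' hl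
        simp only [List.length_nil, Nat.zero_add] at hl
        have ht : TerminatesAfter S' ξ' := trunc_term hTF S n ξ' (le_of_eq hl.symm)
        simp only [hG, if_pos ht]
      -- step 2: S and S' agree up to depth n
      have e2 : histExp S' (fun ξ => v (lastBelief μ ξ)) n []
          = histExp S (fun ξ => v (lastBelief μ ξ)) n [] := by
        refine (histExp_congr_S S S' _ n [] ?_).symm
        intro ξ' hl
        simp only [List.length_nil, Nat.zero_add] at hl
        show S.next ξ' = if ξ'.length < n then S.next ξ' else _
        rw [if_pos hl]
      have e3 : histExp S (fun ξ => v (lastBelief μ ξ)) n [] = massIn S O n := rfl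
      have hlt : 1 - ε < histExp S' (G S') n [] := by
        rw [e1, e2, e3]; exact hS
      have h4 : histExp S' (G S') n [] ≤ infUtility v S' := by
        refine le_ciSup (f := fun m => histExp S' (G S') m []) ?_ n
        exact ⟨1, by rintro x ⟨m, rfl⟩; exact hstep_le_one S' m⟩
      have h5 : infUtility v S' ≤ vInf F v μ :=
        le_ciSup (f := fun S : SeqP F μ => infUtility v S) hbddS S'
      linarith
    have : 1 ≤ vInf F v μ := by
      by_contra hcon
      push_neg at hcon
      have := hkey (1 - vInf F v μ) (by linarith)
      linarith
    linarith
  · intro hveq ε hε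
    have h1 : 1 - ε < vInf F v μ := by rw [hveq]; linarith
    obtain ⟨S, hS⟩ := exists_lt_of_lt_ciSup h1
    obtain ⟨n, hn⟩ := exists_lt_of_lt_ciSup hS
    refine ⟨n, S, ?_⟩
    have hmono : histExp S (G S) n []
        ≤ histExp S (fun ξ => if lastBelief μ ξ ∈ O then (1:ℝ) else 0) n [] := by
      refine histExp_mono S ?_ n []
      intro ξ
      simp only [hG, hv]
      split
      · split <;> norm_num
      · split <;> norm_num
    exact lt_of_lt_of_le hn hmono
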